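/- arXiv:1712.00448 — 3 statements merged into one kernel-verified Lean document; each statement's English description precedes it below -/
import Mathlib

section
/- Let α > 0, β > 0, p ∈ ℝ, a < 0 < b. If u ∈ [a,b] and λ is a subgradient of |·| at u satisfying (p + αu + βλ)(v - u) ≥ 0 for all v ∈ [a,b], then λ = Π_{[-1,1]}(-p/β). In particular, the subgradient λ satisfying the variational inequality is uniquely determined by p. -/
/-!
The subgradient condition gives `λ ∈ [-1,1]`, with `λ = -1` when `u < 0` and `λ = 1` when `u > 0`.
Writing `g = p + αu + βλ`, testing the variational inequality at `v = a` shows `g ≤ 0` whenever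
`u ≥ 0`, and at `v = b` that `g ≥ 0` whenever `u ≤ 0`; since `αu` has the sign of `u`, the same holds
for `p + βλ`. So `λ ≤ -p/β` unless `λ = -1` and `λ ≥ -p/β` unless `λ = 1`, which characterises
`λ` as the projection of `-p/β` onto `[-1,1]`.
-/

lemma eq_min_max_of_le_of_ge {lo hi t x : ℝ} (hlo : lo ≤ x) (hhi : x ≤ hi)
    (hle : lo < x → x ≤ t) (hge : x < hi → t ≤ x) : x = min hi (max lo t) := by
  refine le_antisymm (le_min hhi ?_) ?_
  · rcases hlo.lt_or_eq with hlo | rfl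
    exacts [(hle hlo).trans (le_max_right lo t), le_max_left _ _]
  · rcases hhi.lt_or_eq with hhi | rfl
    exacts [(min_le_right _ _).trans (max_le hlo (hge hhi)), min_le_left _ _]

section AbsSubgradient

variable {lam u : ℝ}

lemma le_one_of_abs_subgradient (hsub : ∀ s : ℝ, lam * (s - u) ≤ |s| - |u|) : lam ≤ 1 := by
  have h := hsub (u + 1)
  rw [add_sub_cancel_left, mul_one] at h
  linarith [abs_add_le u (1 : ℝ), abs_one (α := ℝ)]

lemma neg_one_le_of_abs_subgradient (hsub : ∀ s : ℝ, lam * (s - u) ≤ |s| - |u|) : -1 ≤ lam := by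
  have h := hsub (u - 1)
  rw [sub_sub_cancel_left, mul_neg_one] at h
  linarith [abs_sub u (1 : ℝ), abs_one (α := ℝ)]

lemma nonneg_of_abs_subgradient_of_neg_one_lt (hsub : ∀ s : ℝ, lam * (s - u) ≤ |s| - |u|)
    (hlam : -1 < lam) : 0 ≤ u := by
  by_contra! hu
  have h := hsub 0
  rw [abs_zero, abs_of_neg hu] at h
  nlinarith

lemma nonpos_of_abs_subgradient_of_lt_one (hsub : ∀ s : ℝ, lam * (s - u) ≤ |s| - |u|)
    (hlam : lam < 1) : u ≤ 0 := by
  by_contra! hu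
  have h := hsub 0
  rw [abs_zero, abs_of_pos hu] at h
  nlinarith

end AbsSubgradient

section VariationalInequality

variable {a b u g : ℝ}

lemma nonpos_of_forall_mem_Icc_mul_sub_nonneg (hu : u ∈ Set.Icc a b) (hau : a < u)
    (hvi : ∀ v ∈ Set.Icc a b, 0 ≤ g * (v - u)) : g ≤ 0 :=
  nonpos_of_mul_nonneg_left (hvi a ⟨le_rfl, hu.1.trans hu.2⟩) (sub_neg.mpr hau)

lemma nonneg_of_forall_mem_Icc_mul_sub_nonneg (hu : u ∈ Set.Icc a b) (hub : u < b)
    (hvi : ∀ v ∈ Set.Icc a b, 0 ≤ g * (v - u)) : 0 ≤ g :=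
  nonneg_of_mul_nonneg_left (hvi b ⟨hu.1.trans hu.2, le_rfl⟩) (sub_pos.mpr hub)

end VariationalInequality

/-- If `u ∈ [a,b]` and `λ` is a subgradient of `|·|` at `u` satisfying the
variational inequality, then `λ = Π_{[-1,1]}(-p/β)`; in particular the subgradient
satisfying the variational inequality is uniquely determined by `p`. -/
theorem projection_formula_subgradient
    (α β p a b u lam : ℝ)
    (hα : 0 < α) (hβ : 0 < β) (ha : a < 0) (hb : 0 < b)
    (hu : u ∈ Set.Icc a b)
    (hsub : ∀ s : ℝ, lam * (s - u) ≤ |s| - |u|)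
    (hvi : ∀ v ∈ Set.Icc a b, 0 ≤ (p + α * u + β * lam) * (v - u)) :
    lam = min 1 (max (-1) (-p / β)) := by
  refine eq_min_max_of_le_of_ge (neg_one_le_of_abs_subgradient hsub)
    (le_one_of_abs_subgradient hsub) (fun hlam => ?_) (fun hlam => ?_)
  · have hu0 := nonneg_of_abs_subgradient_of_neg_one_lt hsub hlam
    have hg := nonpos_of_forall_mem_Icc_mul_sub_nonneg hu (ha.trans_le hu0) hvi
    rw [le_div_iff₀ hβ]
    linarith [mul_nonneg hα.le hu0]
  · have hu0 := nonpos_of_abs_subgradient_of_lt_one hsub hlam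
    have hg := nonneg_of_forall_mem_Icc_mul_sub_nonneg hu (hu0.trans_lt hb) hvi
    rw [div_le_iff₀ hβ]
    linarith [mul_nonpos_of_nonneg_of_nonpos hα.le hu0]
end

section
/- Let α, β > 0 and a < 0 < b. For i = 1,…,n let wᵢ > 0 and pᵢ ∈ ℝ. Suppose u ∈ [a,b]ⁿ and λ is a subgradient of ψ(u) = Σᵢ wᵢ|uᵢ| (with respect to the weighted inner product) such that Σᵢ wᵢ (pᵢ + αuᵢ + βλᵢ)(vᵢ - uᵢ) ≥ 0 for all v ∈ [a,b]ⁿ. Then for every i, uᵢ = Π_{[a,b]}(-(pᵢ + βλᵢ)/α) and λᵢ = Π_{[-1,1]}(-pᵢ/β); in particular λ is uniquely determined. -/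
open Finset

/-!
Testing both inequalities against vectors that differ from `u` in one coordinate decouples them:
`λᵢ` is a subgradient of `|·|` at `uᵢ`, and `uᵢ` solves the scalar variational inequality on
`[a, b]` with slope `gᵢ = pᵢ + α uᵢ + β λᵢ`, i.e. `uᵢ = Π_{[a,b]}(uᵢ - gᵢ / α)`, which is the first
formula. For the second, `λᵢ = sign uᵢ` when `uᵢ ≠ 0`, and the sign of `gᵢ` forced by the
variational inequality puts `-pᵢ / β` beyond `±1`; if `uᵢ = 0`, it lies inside `(a, b)`, so
`gᵢ = 0` and `λᵢ = -pᵢ / β ∈ [-1, 1]`.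
-/

lemma Fintype.sum_sub_update {ι α M : Type*} [Fintype ι] [DecidableEq ι] [AddCommGroup M]
    (φ : ι → α → M) (u : ι → α) (j : ι) (t : α) :
    ∑ i, (φ i (Function.update u j t i) - φ i (u i)) = φ j t - φ j (u j) := by
  rw [Fintype.sum_eq_single j fun i hi ↦ by simp [Function.update_of_ne hi]]
  simp

section AbsSubgradient

variable {l x : ℝ}

lemma mem_Icc_of_abs_subgradient (h : ∀ t, l * (t - x) ≤ |t| - |x|) : l ∈ Set.Icc (-1) 1 := by
  have h₁ := h (x + 1)
  have h₂ := h (x - 1)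
  simp only [add_sub_cancel_left, sub_sub_cancel_left, mul_one, mul_neg] at h₁ h₂
  constructor
  · linarith [abs_sub x (1 : ℝ), abs_one (α := ℝ)]
  · linarith [abs_add_le x 1, abs_one (α := ℝ)]

lemma mul_eq_abs_of_abs_subgradient (h : ∀ t, l * (t - x) ≤ |t| - |x|) : l * x = |x| := by
  have h₀ := h 0
  have h₂ := h (2 * x)
  rw [abs_zero] at h₀
  rw [abs_mul, abs_two] at h₂
  linarith

end AbsSubgradient

section VariationalInequality

variable {a b x g : ℝ} (h : ∀ t ∈ Set.Icc a b, 0 ≤ g * (t - x))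
include h

lemma nonneg_of_variational_of_lt_right (hab : a ≤ b) (hxb : x < b) : 0 ≤ g :=
  nonneg_of_mul_nonneg_left (h b ⟨hab, le_rfl⟩) (sub_pos.2 hxb)

lemma nonpos_of_variational_of_left_lt (hab : a ≤ b) (hax : a < x) : g ≤ 0 := by
  have := h a ⟨le_rfl, hab⟩
  nlinarith

lemma eq_min_max_of_variational {c : ℝ} (hc : 0 ≤ c) (hx : x ∈ Set.Icc a b) :
    x = min b (max a (x - g / c)) := by
  have hab := hx.1.trans hx.2
  rcases hx.1.lt_or_eq with hax | rfl <;> rcases hx.2.lt_or_eq with hxb | rfl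
  · have : g = 0 := le_antisymm (nonpos_of_variational_of_left_lt h hab hax)
      (nonneg_of_variational_of_lt_right h hab hxb)
    simp [this, hax.le, hxb.le]
  · have : g / c ≤ 0 :=
      div_nonpos_of_nonpos_of_nonneg (nonpos_of_variational_of_left_lt h hab hax) hc
    rw [min_eq_left (le_max_of_le_right (by linarith))]
  · have : 0 ≤ g / c := div_nonneg (nonneg_of_variational_of_lt_right h hab hxb) hc
    rw [max_eq_left (by linarith), min_eq_right hab]
  · simp

end VariationalInequality

lemma eq_min_max_of_abs_subgradient_of_variational {α β a b p x l : ℝ} (hα : 0 ≤ α) (hβ : 0 < β)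
    (ha : a < 0) (hb : 0 < b) (hl : ∀ t, l * (t - x) ≤ |t| - |x|)
    (hvi : ∀ t ∈ Set.Icc a b, 0 ≤ (p + α * x + β * l) * (t - x)) :
    l = min 1 (max (-1) (-p / β)) := by
  have hab : a ≤ b := ha.le.trans hb.le
  have hlx := mul_eq_abs_of_abs_subgradient hl
  rcases lt_trichotomy x 0 with hx | rfl | hx
  · have hl₁ : l = -1 := mul_right_cancel₀ hx.ne (by rw [hlx, abs_of_neg hx]; ring)
    have hg := nonneg_of_variational_of_lt_right hvi hab (hx.trans hb)
    have : -p / β ≤ -1 := by rw [div_le_iff₀ hβ]; subst hl₁; nlinarith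
    rw [max_eq_left this, min_eq_right (by norm_num), hl₁]
  · have hg : p + β * l = 0 := by
      simpa using le_antisymm (nonpos_of_variational_of_left_lt hvi hab ha)
        (nonneg_of_variational_of_lt_right hvi hab hb)
    have : l = -p / β := by rw [eq_div_iff hβ.ne']; linarith
    obtain ⟨hl₁, hl₂⟩ := mem_Icc_of_abs_subgradient hl
    rw [← this, max_eq_right hl₁, min_eq_right hl₂]
  · have hl₁ : l = 1 := mul_right_cancel₀ hx.ne' (by rw [hlx, abs_of_pos hx]; ring)
    have hg := nonpos_of_variational_of_left_lt hvi hab (ha.trans hx)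
    have : 1 ≤ -p / β := by rw [le_div_iff₀ hβ]; subst hl₁; nlinarith
    rw [max_eq_right (by linarith), min_eq_left this, hl₁]

section Coordinates

variable {ι : Type*} [Fintype ι] [DecidableEq ι] {w u : ι → ℝ} (hw : ∀ i, 0 < w i)
include hw

lemma abs_subgradient_apply {lam : ι → ℝ}
    (hsub : ∀ v : ι → ℝ, ∑ i, w i * lam i * (v i - u i) ≤ (∑ i, w i * |v i|) - ∑ i, w i * |u i|)
    (j : ι) (t : ℝ) : lam j * (t - u j) ≤ |t| - |u j| := by
  have h := hsub (Function.update u j t)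
  simp only [mul_sub, ← Finset.sum_sub_distrib] at h
  rw [Fintype.sum_sub_update (fun i s ↦ w i * lam i * s),
    Fintype.sum_sub_update (fun i s ↦ w i * |s|)] at h
  nlinarith [hw j]

lemma variational_apply {S : Set ℝ} {c : ι → ℝ} (hu : ∀ i, u i ∈ S)
    (hvi : ∀ v : ι → ℝ, (∀ i, v i ∈ S) → 0 ≤ ∑ i, w i * c i * (v i - u i))
    (j : ι) (t : ℝ) (ht : t ∈ S) : 0 ≤ c j * (t - u j) := by
  have h := hvi (Function.update u j t)
    ((Function.forall_update_iff u fun _ s ↦ s ∈ S).2 ⟨ht, fun i _ ↦ hu i⟩)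
  simp only [mul_sub] at h
  rw [Fintype.sum_sub_update (fun i s ↦ w i * c i * s)] at h
  nlinarith [hw j]

end Coordinates

/-- Discrete projection formulas: if `u ∈ [a,b]ⁿ` and `λ` is a subgradient of the
weighted `ℓ¹` functional at `u` satisfying the discrete variational inequality,
then componentwise `uᵢ = Π_{[a,b]}(-(pᵢ + βλᵢ)/α)` and `λᵢ = Π_{[-1,1]}(-pᵢ/β)`;
in particular `λ` is uniquely determined. -/
theorem discrete_projection_formulas
    (n : ℕ) (w p : Fin n → ℝ) (hw : ∀ i, 0 < w i)
    (α β a b : ℝ) (hα : 0 < α) (hβ : 0 < β) (ha : a < 0) (hb : 0 < b)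
    (u lam : Fin n → ℝ) (hu : ∀ i, u i ∈ Set.Icc a b)
    (hsub : ∀ v : Fin n → ℝ,
      ∑ i, w i * lam i * (v i - u i) ≤ (∑ i, w i * |v i|) - ∑ i, w i * |u i|)
    (hvi : ∀ v : Fin n → ℝ, (∀ i, v i ∈ Set.Icc a b) →
      0 ≤ ∑ i, w i * (p i + α * u i + β * lam i) * (v i - u i)) :
    ∀ i, u i = min b (max a (-(p i + β * lam i) / α)) ∧
      lam i = min 1 (max (-1) (-p i / β)) := by
  intro j
  have hl := abs_subgradient_apply hw hsub j
  have hvi_j := variational_apply hw hu hvi j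
  refine ⟨?_, eq_min_max_of_abs_subgradient_of_variational hα.le hβ ha hb hl hvi_j⟩
  have : -(p j + β * lam j) / α = u j - (p j + α * u j + β * lam j) / α := by
    field_simp; ring
  rw [this]
  exact eq_min_max_of_variational hvi_j hα.le (hu j)
end

section
/- Let a ≤ b be reals and f : ℝ → ℝ, f(p) = α⁻¹[max(0, -p - β) + min(0, -p + β) - max(0, -p - β - αb) - min(0, -p + β - αa)] with α, β > 0 and a < 0 < b. Then f(p) = Π_{[a,b]}(-α⁻¹(p + β Π_{[-1,1]}(-β⁻¹ p))). -/
/-!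
Write `q = -p` and `S q = max 0 (q - β) + min 0 (q + β)` for soft thresholding at level `β`.
Both sides rest on the identity `Π_{[c,d]}(t) = t - max 0 (t - d) - min 0 (t - c)` for `c ≤ d`.
With `[c,d] = [-β,β]` it gives `S q = q - Π_{[-β,β]}(q)`, so the right-hand side is
`Π_{[a,b]}(α⁻¹ S q)`. With `[c,d] = [αa,αb]` it gives the bracket on the left-hand side
as `Π_{[αa,αb]}(S q)`, because for `αa ≤ 0 ≤ αb` the positive part of `S q - αb` is that of
`q - β - αb`, and the negative part of `S q - αa` is that of `q + β - αa`. Scaling the projection by `α⁻¹` finishes the proof.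
-/

variable {R : Type*} [Field R] [LinearOrder R] [IsStrictOrderedRing R]

theorem min_max_eq_sub_max_sub_min {c d : R} (hcd : c ≤ d) (t : R) :
    min d (max c t) = t - max 0 (t - d) - min 0 (t - c) := by
  rcases le_total t c with htc | htc
  · rw [max_eq_left htc, min_eq_right hcd, max_eq_left (by linarith), min_eq_right (by linarith)]
    ring
  rcases le_total t d with htd | htd
  · rw [max_eq_right htc, min_eq_right htd, max_eq_left (by linarith), min_eq_left (by linarith)]
    ring
  · rw [max_eq_right htc, min_eq_left htd, max_eq_right (by linarith), min_eq_left (by linarith)]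
    ring

theorem mul_min_max_of_nonneg {k : R} (hk : 0 ≤ k) (c d t : R) :
    k * min d (max c t) = min (k * d) (max (k * c) (k * t)) := by
  rw [mul_min_of_nonneg _ _ hk, mul_max_of_nonneg _ _ hk]

def softThreshold (β t : R) : R := max 0 (t - β) + min 0 (t + β)

theorem softThreshold_eq_sub_min_max {β : R} (hβ : 0 ≤ β) (t : R) :
    softThreshold β t = t - min β (max (-β) t) := by
  rw [min_max_eq_sub_max_sub_min (by linarith), softThreshold, sub_neg_eq_add]
  ring

theorem max_zero_softThreshold_sub {β d : R} (hβ : 0 ≤ β) (hd : 0 ≤ d) (t : R) :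
    max 0 (softThreshold β t - d) = max 0 (t - β - d) := by
  rcases le_total t β with htβ | htβ
  · have hS : softThreshold β t ≤ 0 := by
      rw [softThreshold, max_eq_left (by linarith : t - β ≤ 0), zero_add]
      exact min_le_left 0 (t + β)
    rw [max_eq_left (by linarith : t - β - d ≤ 0), max_eq_left (by linarith)]
  · rw [softThreshold, max_eq_right (by linarith : 0 ≤ t - β), min_eq_left (by linarith), add_zero]

theorem min_zero_softThreshold_sub {β c : R} (hβ : 0 ≤ β) (hc : c ≤ 0) (t : R) :
    min 0 (softThreshold β t - c) = min 0 (t + β - c) := by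
  rcases le_total t (-β) with htβ | htβ
  · rw [softThreshold, min_eq_right (by linarith : t + β ≤ 0), max_eq_left (by linarith), zero_add]
  · have hS : 0 ≤ softThreshold β t := by
      rw [softThreshold, min_eq_left (by linarith : 0 ≤ t + β), add_zero]
      exact le_max_left 0 (t - β)
    rw [min_eq_left (by linarith : 0 ≤ t + β - c), min_eq_left (by linarith)]

theorem min_max_softThreshold {β c d : R} (hβ : 0 ≤ β) (hc : c ≤ 0) (hd : 0 ≤ d) (t : R) :
    min d (max c (softThreshold β t))
      = softThreshold β t - max 0 (t - β - d) - min 0 (t + β - c) := by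
  rw [min_max_eq_sub_max_sub_min (hc.trans hd), max_zero_softThreshold_sub hβ hd,
    min_zero_softThreshold_sub hβ hc]

/-- Stadler's max/min identity for the projected control:
`α⁻¹[max(0,-p-β) + min(0,-p+β) - max(0,-p-β-αb) - min(0,-p+β-αa)]
 = Π_{[a,b]}(-α⁻¹(p + β Π_{[-1,1]}(-β⁻¹ p)))`. -/
theorem stadler_maxmin_identity
    (α β a b : ℝ) (hα : 0 < α) (hβ : 0 < β) (ha : a < 0) (hb : 0 < b) (p : ℝ) :
    α⁻¹ * (max 0 (-p - β) + min 0 (-p + β)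
        - max 0 (-p - β - α * b) - min 0 (-p + β - α * a))
      = min b (max a (-α⁻¹ * (p + β * min 1 (max (-1) (-β⁻¹ * p))))) := by
  have hinner : p + β * min 1 (max (-1) (-β⁻¹ * p)) = -softThreshold β (-p) := by
    have hscale : β * (-β⁻¹ * p) = -p := by field_simp
    rw [mul_min_max_of_nonneg hβ.le, mul_one, mul_neg_one, hscale,
      softThreshold_eq_sub_min_max hβ.le]
    ring
  calc α⁻¹ * (max 0 (-p - β) + min 0 (-p + β)
          - max 0 (-p - β - α * b) - min 0 (-p + β - α * a))
      = α⁻¹ * min (α * b) (max (α * a) (softThreshold β (-p))) := by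
        rw [min_max_softThreshold hβ.le (mul_neg_of_pos_of_neg hα ha).le (mul_pos hα hb).le]
        rfl
    _ = min b (max a (α⁻¹ * softThreshold β (-p))) := by
        rw [mul_min_max_of_nonneg (inv_nonneg.2 hα.le), inv_mul_cancel_left₀ hα.ne',
          inv_mul_cancel_left₀ hα.ne']
    _ = min b (max a (-α⁻¹ * (p + β * min 1 (max (-1) (-β⁻¹ * p))))) := by
        rw [hinner, neg_mul_neg]
end
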